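/- arXiv:2003.07285 — 3 statements merged into one kernel-verified Lean document; each statement's English description precedes it below -/
import Mathlib

section
/- Let s be the concatenation of strings s_1, s_2, …, s_k and let s̄ be the concatenation of strings s̄_1, s̄_2, …, s̄_l. Then the length of the longest common subsequence of s and s̄ is at most (k + l) · max_{i ∈ [k], j ∈ [l]} |lcs(s_i, s̄_j)|. -/
/-!
Cut a common subsequence `t` of `s₁ ++ ⋯ ++ s_k` and `s̄₁ ++ ⋯ ++ s̄_l` at every block boundary
of either string. Each of the at most `k + l` pieces lies inside a single block `s_i` and a
single block `s̄_j`, so it is a common subsequence of that pair and has length at most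
`max |lcs(s_i, s̄_j)|`.
-/

/-- `lcsLen u v` is the length of a longest common subsequence of the strings
(lists) `u` and `v`: the maximum length of a list that is a sublist
(not necessarily contiguous subsequence) of both `u` and `v`. -/
def lcsLen {α : Type*} [DecidableEq α] (u v : List α) : ℕ :=
  ((u.sublists.filter (fun t => decide (t.Sublist v))).map List.length).foldr max 0

section CommonSublist

open List

variable {α : Type*}

theorem le_lcsLen [DecidableEq α] {t u v : List α} (hu : t <+ u) (hv : t <+ v) :
    t.length ≤ lcsLen u v :=
  le_max_of_le (mem_map_of_mem
    (mem_filter.mpr ⟨mem_sublists.mpr hu, decide_eq_true hv⟩)) le_rfl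

theorem lcsLen_le [DecidableEq α] {u v : List α} {n : ℕ}
    (h : ∀ t : List α, t <+ u → t <+ v → t.length ≤ n) : lcsLen u v ≤ n := by
  refine max_le_of_forall_le _ _ fun x hx => ?_
  simp only [mem_map, mem_filter, mem_sublists, decide_eq_true_eq] at hx
  obtain ⟨t, ⟨hu, hv⟩, rfl⟩ := hx
  exact h t hu hv

/-- `p` is cut off where the first of the blocks `a`, `b` to be exhausted ends. -/
theorem exists_common_prefix_of_sublist_append {t a A b B : List α}
    (ha : t <+ a ++ A) (hb : t <+ b ++ B) :
    ∃ p r, t = p ++ r ∧ p <+ a ∧ p <+ b ∧ (r <+ A ∧ r <+ b ++ B ∨ r <+ a ++ A ∧ r <+ B) := by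
  obtain ⟨t₁, t₂, rfl, ht₁, ht₂⟩ := sublist_append_iff.mp ha
  obtain ⟨u₁, u₂, heq, hu₁, hu₂⟩ := sublist_append_iff.mp hb
  rcases le_total t₁.length u₁.length with hle | hle
  · have hpre : t₁ <+: u₁ := prefix_of_prefix_length_le ⟨t₂, rfl⟩ ⟨u₂, heq.symm⟩ hle
    exact ⟨t₁, t₂, rfl, ht₁, hpre.sublist.trans hu₁,
      .inl ⟨ht₂, (suffix_append t₁ t₂).sublist.trans hb⟩⟩
  · have hpre : u₁ <+: t₁ := prefix_of_prefix_length_le ⟨u₂, heq.symm⟩ ⟨t₂, rfl⟩ hle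
    refine ⟨u₁, u₂, heq, hpre.sublist.trans ht₁, hu₁, .inr ⟨?_, hu₂⟩⟩
    exact (heq ▸ suffix_append u₁ u₂).sublist.trans ha

theorem length_le_of_sublist_flatten (M : ℕ) :
    ∀ (ss tt : List (List α)) (t : List α),
      (∀ a ∈ ss, ∀ b ∈ tt, ∀ u : List α, u <+ a → u <+ b → u.length ≤ M) →
      t <+ ss.flatten → t <+ tt.flatten → t.length ≤ (ss.length + tt.length) * M
  | [], _, t, _, hs, _ => by simp [sublist_nil.mp hs]
  | _ :: _, [], t, _, _, ht => by simp [sublist_nil.mp ht]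
  | a :: ss, b :: tt, t, hM, hs, ht => by
    obtain ⟨p, r, rfl, hpa, hpb, hr⟩ := exists_common_prefix_of_sublist_append hs ht
    have hp : p.length ≤ M := hM a (by simp) b (by simp) p hpa hpb
    rcases hr with ⟨hrs, hrt⟩ | ⟨hrs, hrt⟩
    · have := length_le_of_sublist_flatten M ss (b :: tt) r
        (fun x hx => hM x (mem_cons_of_mem a hx)) hrs hrt
      simp only [length_append, length_cons] at this ⊢
      linarith
    · have := length_le_of_sublist_flatten M (a :: ss) tt r
        (fun x hx y hy => hM x hx y (mem_cons_of_mem b hy)) hrs hrt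
      simp only [length_append, length_cons] at this ⊢
      linarith
  termination_by ss tt => ss.length + tt.length

end CommonSublist

/-- Let `s` be the concatenation of strings `s_1, …, s_k` and `s̄` the
concatenation of strings `s̄_1, …, s̄_l`. Then
`|lcs(s, s̄)| ≤ (k + l) · max_{i,j} |lcs(s_i, s̄_j)|`. -/
theorem lcs_concat_le {α : Type*} [DecidableEq α] (k l : ℕ)
    (s : Fin k → List α) (sb : Fin l → List α) :
    lcsLen (List.ofFn s).flatten (List.ofFn sb).flatten ≤
      (k + l) * Finset.univ.sup (fun p : Fin k × Fin l => lcsLen (s p.1) (sb p.2)) := by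
  set M := Finset.univ.sup (fun p : Fin k × Fin l => lcsLen (s p.1) (sb p.2))
  have hblock : ∀ a ∈ List.ofFn s, ∀ b ∈ List.ofFn sb, ∀ u : List α, u.Sublist a → u.Sublist b →
      u.length ≤ M := by
    intro a ha b hb u hua hub
    obtain ⟨i, rfl⟩ := List.mem_ofFn.mp ha
    obtain ⟨j, rfl⟩ := List.mem_ofFn.mp hb
    exact (le_lcsLen hua hub).trans
      (Finset.le_sup (f := fun p : Fin k × Fin l => lcsLen (s p.1) (sb p.2)) (Finset.mem_univ (i, j)))
  refine lcsLen_le fun t hs ht => ?_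
  simpa using length_le_of_sublist_flatten M _ _ t hblock hs ht
end

section
/- Let u and v be two strings in each of which no symbol appears more than once, and let C be the set of symbols occurring in both u and v. If every two symbols of C appear in the same relative order in u as in v, then |lcs(u, v)| ≥ |C|. -/
/-!
The symbols of `C`, listed in the order in which they occur in `u`, form a sublist `w` of `u`.
By the consistency of the two orders, their positions in `v` increase along `w` as well, so `w`
is also a sublist of `v`: a common subsequence of length `|C|`.
-/

open List

namespace List

variable {α : Type*} [DecidableEq α]

theorem Nodup.pairwise_idxOf_lt {l : List α} (h : l.Nodup) :
    l.Pairwise (fun a b => l.idxOf a < l.idxOf b) := by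
  rw [pairwise_iff_getElem]
  intro i j hi hj hij
  rwa [h.idxOf_getElem, h.idxOf_getElem]

theorem sublist_of_pairwise_idxOf_lt {w v : List α} (hv : v.Nodup) (hwv : w ⊆ v)
    (hw : w.Pairwise (fun a b => v.idxOf a < v.idxOf b)) : w <+ v :=
  have : Std.Antisymm (fun a b => v.idxOf a < v.idxOf b) :=
    ⟨fun _ _ hab hba => absurd hba hab.not_gt⟩
  sublist_of_subperm_of_pairwise
    (subperm_of_subset (hw.imp fun h => ne_of_apply_ne (v.idxOf ·) h.ne) hwv)
    hw hv.pairwise_idxOf_lt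

end List

theorem length_le_lcsLen {α : Type*} [DecidableEq α] {u v t : List α}
    (htu : t <+ u) (htv : t <+ v) : t.length ≤ lcsLen u v :=
  le_max_of_le (mem_map_of_mem (mem_filter.mpr
    ⟨mem_sublists.mpr htu, decide_eq_true htv⟩)) le_rfl

/-- Let `u` and `v` be duplicate-free strings and let `C` be the set of
symbols occurring in both. If every two symbols of `C` appear in the same relative order
in `u` as in `v`, then `|lcs(u, v)| ≥ |C|`. -/
theorem lcs_ge_of_consistent_order {α : Type*} [DecidableEq α]
    (u v : List α) (hu : u.Nodup) (hv : v.Nodup)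
    (C : Finset α) (hC : C = u.toFinset ∩ v.toFinset)
    (horder : ∀ c₁ ∈ C, ∀ c₂ ∈ C,
      (u.idxOf c₁ ≤ u.idxOf c₂ ↔ v.idxOf c₁ ≤ v.idxOf c₂)) :
    C.card ≤ lcsLen u v := by
  have hCuv : ∀ a ∈ C, a ∈ u ∧ a ∈ v := by simp [hC]
  set w := u.filter (· ∈ C)
  have hwu : w <+ u := filter_sublist
  have hmem : ∀ a, a ∈ w ↔ a ∈ C := fun a => by
    simpa [w] using fun ha => (hCuv a ha).1
  have hw_order_v : w.Pairwise (fun a b => v.idxOf a < v.idxOf b) :=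
    (hu.pairwise_idxOf_lt.sublist hwu).imp_of_mem fun ha hb hab => by
      have := horder _ ((hmem _).1 hb) _ ((hmem _).1 ha)
      omega
  have hwv : w <+ v := sublist_of_pairwise_idxOf_lt hv
    (fun a ha => (hCuv a ((hmem a).1 ha)).2) hw_order_v
  calc C.card = w.toFinset.card := by congr 1; ext a; simp [hmem]
    _ ≤ w.length := toFinset_card_le _
    _ ≤ lcsLen u v := length_le_lcsLen hwu hwv
end

section
/- Let Σ be a finite alphabet and let (π_1, σ_1), (π_2, σ_2), …, (π_m, σ_m) be m ≥ 4 pairs of strings, where every π_i and every σ_i is a permutation of Σ. Suppose there is a real d > 0 such that |lcs(π_i, σ_i)| ≥ d for every i ∈ [m]. Then the sum over all ordered pairs (i, j) ∈ [m] × [m] of |lcs(π_i, σ_j)| is at least d^{1/3} · m²/8; equivalently, the average of |lcs(π_i, σ_j)| over all ordered pairs (i, j) is at least d^{1/3}/8. -/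
/-!
For a longest common subsequence `w` of `π_i` and `σ_i`, the Erdős–Szekeres theorem applied to
the order of `w` inside `σ_j` gives either a long common subsequence of `π_i` and `σ_j` or a long
set `D` of letters that `σ_j` lists in reverse; applied again to `D` inside `π_k`, it gives a long
common subsequence of `π_k` with `σ_i` or with `σ_j`. Hence
`|lcs(π_i, σ_i)| ≤ |lcs(π_i, σ_j)| · |lcs(π_k, σ_j)| · |lcs(π_k, σ_i)|`, so among any three
indices some ordered pair `(a, b)` has `|lcs(π_a, σ_b)| ≥ d^{1/3}`. The graph of the pairs that
fail this in both directions is therefore triangle-free, and Mantel's theorem bounds its edges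
by `m² / 4`, leaving at least `m² / 8` ordered pairs above the threshold when `m ≥ 4`.
-/

open Finset

theorem Finset.card_le_mul_of_isChain_of_isAntichain {α : Type*} [PartialOrder α]
    (s : Finset α) {a b : ℕ}
    (hchain : ∀ t ⊆ s, IsChain (· ≤ ·) (t : Set α) → #t ≤ a)
    (hanti : ∀ t ⊆ s, IsAntichain (· ≤ ·) (t : Set α) → #t ≤ b) :
    #s ≤ a * b := by
  classical
  induction a generalizing s with
  | zero =>
    rw [Nat.zero_mul, Nat.le_zero, card_eq_zero, eq_empty_iff_forall_notMem]
    intro x hx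
    simpa using hchain {x} (singleton_subset_iff.2 hx) (by simp)
  | succ a ih =>
    -- Removing the minimal elements, an antichain, shortens every chain.
    set M := {x ∈ s | Minimal (· ∈ s) x}
    have hMs : M ⊆ s := filter_subset _ _
    have hM : #M ≤ b := hanti M hMs <| (setOfPred_minimal_antichain (· ∈ s)).subset
      fun x hx => (mem_filter.1 hx).2
    have hrest : #(s \ M) ≤ a * b := by
      refine ih _ (fun t hts ht => ?_) fun t hts => hanti t (hts.trans sdiff_subset)
      obtain rfl | hne := t.eq_empty_or_nonempty
      · simp
      obtain ⟨m, hm⟩ := t.exists_minimal hne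
      have hmt : ∀ x ∈ t, m ≤ x := fun x hx =>
        (ht.total hm.prop hx).elim id fun hxm => hm.2 hx hxm
      obtain ⟨hms, -⟩ := mem_sdiff.1 (hts hm.prop)
      obtain ⟨y, hym, hy⟩ := s.exists_le_minimal hms
      have hyt : y ∉ t := fun h => (mem_sdiff.1 (hts h)).2 (mem_filter.2 ⟨hy.prop, hy⟩)
      have := hchain (insert y t) (insert_subset hy.prop (hts.trans sdiff_subset)) <| by
        rw [coe_insert]
        exact ht.insert fun x hx _ => Or.inl (hym.trans (hmt x hx))
      rw [card_insert_of_notMem hyt] at this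
      omega
    rw [← card_sdiff_add_card_eq_card hMs, Nat.succ_mul]
    omega

/-- The Erdős–Szekeres theorem, for a finite set carrying two linear orders given by keys. -/
theorem Finset.card_le_mul_of_agree_of_disagree {α β : Type*} [LinearOrder β]
    (s : Finset α) {f g : α → β} (hf : Set.InjOn f s) (hg : Set.InjOn g s) {a b : ℕ}
    (hagree : ∀ t ⊆ s, (∀ x ∈ t, ∀ y ∈ t, f x < f y → g x < g y) → #t ≤ a)
    (hdisagree : ∀ t ⊆ s, (∀ x ∈ t, ∀ y ∈ t, f x < f y → g y < g x) → #t ≤ b) :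
    #s ≤ a * b := by
  classical
  set φ : α → β × β := fun x => (f x, g x)
  have hφ : Set.InjOn φ s := fun x hx y hy h => hf hx hy (congrArg Prod.fst h)
  have hpre : ∀ t ⊆ s.image φ, #t ≤ #{x ∈ s | φ x ∈ t} := fun t hts =>
    (card_le_card fun p hp => by
      obtain ⟨x, hx, rfl⟩ := mem_image.1 (hts hp)
      exact mem_image_of_mem φ (mem_filter.2 ⟨hx, hp⟩)).trans card_image_le
  rw [← card_image_of_injOn hφ]
  refine (s.image φ).card_le_mul_of_isChain_of_isAntichain (fun t hts ht => ?_) fun t hts ht => ?_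
  · refine (hpre t hts).trans <| hagree _ (filter_subset _ _) fun x hx y hy hxy => ?_
    obtain ⟨hxs, hxt⟩ := mem_filter.1 hx
    obtain ⟨hys, hyt⟩ := mem_filter.1 hy
    have hne : g x ≠ g y := fun h => hxy.ne (congrArg f (hg hxs hys h))
    rcases ht.total hxt hyt with h | h
    · exact lt_of_le_of_ne h.2 hne
    · exact absurd h.1 hxy.not_ge
  · refine (hpre t hts).trans <| hdisagree _ (filter_subset _ _) fun x hx y hy hxy => ?_
    obtain ⟨-, hxt⟩ := mem_filter.1 hx
    obtain ⟨-, hyt⟩ := mem_filter.1 hy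
    exact not_le.1 fun h => ht hxt hyt (fun e => hxy.ne (congrArg Prod.fst e)) ⟨hxy.le, h⟩

namespace List

variable {α : Type*} [DecidableEq α]

theorem length_le_lcsLen {s u v : List α} (hsu : s <+ u) (hsv : s <+ v) :
    s.length ≤ lcsLen u v :=
  le_max_of_le' 0 (mem_map.2 ⟨s, mem_filter.2 ⟨mem_sublists.2 hsu, by simpa using hsv⟩, rfl⟩)
    le_rfl

theorem lcsLen_le {u v : List α} {n : ℕ} (h : ∀ s, s <+ u → s <+ v → s.length ≤ n) :
    lcsLen u v ≤ n :=
  max_le_of_forall_le _ n <| by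
    simp only [mem_map, mem_filter, mem_sublists, decide_eq_true_eq]
    rintro _ ⟨s, ⟨hsu, hsv⟩, rfl⟩
    exact h s hsu hsv

theorem injOn_idxOf (u : List α) : Set.InjOn u.idxOf u.toFinset :=
  fun _ ha _ _ h => (idxOf_inj (mem_toFinset.1 ha)).1 h

theorem Nodup.pairwise_idxOf_lt_s9 {u : List α} (hu : u.Nodup) :
    u.Pairwise fun a b => u.idxOf a < u.idxOf b :=
  pairwise_iff_getElem.2 fun i j hi hj hij => by rwa [hu.idxOf_getElem, hu.idxOf_getElem]

theorem Sublist.idxOf_lt_idxOf_iff {w u : List α} (hwu : w <+ u) (hu : u.Nodup) {a b : α}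
    (ha : a ∈ w) (hb : b ∈ w) : u.idxOf a < u.idxOf b ↔ w.idxOf a < w.idxOf b := by
  have key : ∀ {a b}, a ∈ w → b ∈ w → w.idxOf a < w.idxOf b → u.idxOf a < u.idxOf b :=
    fun ha hb h => by
      simpa only [getElem_idxOf] using pairwise_iff_getElem.1 (hu.pairwise_idxOf_lt_s9.sublist hwu)
        _ _ (idxOf_lt_length_of_mem ha) (idxOf_lt_length_of_mem hb) h
  refine ⟨fun h => ?_, key ha hb⟩
  rcases lt_trichotomy (w.idxOf a) (w.idxOf b) with hab | hab | hab
  · exact hab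
  · exact absurd ((idxOf_inj ha).1 hab ▸ h) (lt_irrefl _)
  · exact absurd (key hb ha hab) h.not_gt

theorem toFinset_filter_mem {u : List α} {T : Finset α} (hT : T ⊆ u.toFinset) :
    (u.filter (· ∈ T)).toFinset = T := by
  ext c
  simpa using fun hc => mem_toFinset.1 (hT hc)

theorem card_le_lcsLen {u v : List α} (hu : u.Nodup) (hv : v.Nodup) {T : Finset α}
    (hTu : T ⊆ u.toFinset) (hTv : T ⊆ v.toFinset)
    (hT : ∀ a ∈ T, ∀ b ∈ T, u.idxOf a < u.idxOf b → v.idxOf a < v.idxOf b) :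
    #T ≤ lcsLen u v := by
  have hfilter : u.filter (· ∈ T) = v.filter (· ∈ T) := by
    refine Perm.eq_of_pairwise (le := fun a b => v.idxOf a < v.idxOf b)
      (fun _ _ _ _ h h' => absurd (h.trans h') (lt_irrefl _)) ?_
      (hv.pairwise_idxOf_lt_s9.sublist filter_sublist)
      (perm_of_nodup_nodup_toFinset_eq (hu.filter _) (hv.filter _)
        (by rw [toFinset_filter_mem hTu, toFinset_filter_mem hTv]))
    refine (hu.pairwise_idxOf_lt_s9.sublist filter_sublist).imp_of_mem fun ha hb h => ?_
    simp only [mem_filter, decide_eq_true_eq] at ha hb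
    exact hT _ ha.2 _ hb.2 h
  calc #T = (u.filter (· ∈ T)).length := by
        rw [← toFinset_card_of_nodup (hu.filter _), toFinset_filter_mem hTu]
    _ ≤ lcsLen u v := length_le_lcsLen filter_sublist (hfilter ▸ filter_sublist)

theorem lcsLen_le_lcsLen_mul_lcsLen_mul_lcsLen {x y z t : List α} (hx : x.Nodup)
    (hy : y.Nodup) (hz : z.Nodup) (ht : t.Nodup) (hxy : x ⊆ y) (hxz : x ⊆ z) :
    lcsLen x t ≤ lcsLen x y * lcsLen z y * lcsLen z t := by
  refine lcsLen_le fun w hwx hwt => ?_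
  have hsub : ∀ {u v : List α}, u ⊆ v → u.toFinset ⊆ v.toFinset :=
    fun h _ hc => mem_toFinset.2 (h (mem_toFinset.1 hc))
  have hWx : w.toFinset ⊆ x.toFinset := hsub hwx.subset
  have hWy : w.toFinset ⊆ y.toFinset := hWx.trans (hsub hxy)
  have hWz : w.toFinset ⊆ z.toFinset := hWx.trans (hsub hxz)
  have hWt : w.toFinset ⊆ t.toFinset := hsub hwt.subset
  rw [← toFinset_card_of_nodup (hx.sublist hwx), mul_assoc]
  refine w.toFinset.card_le_mul_of_agree_of_disagree ((injOn_idxOf x).mono (coe_subset.2 hWx))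
    ((injOn_idxOf y).mono (coe_subset.2 hWy))
    (fun T hT => card_le_lcsLen hx hy (hT.trans hWx) (hT.trans hWy)) fun D hD hxyD => ?_
  rw [mul_comm]
  refine D.card_le_mul_of_agree_of_disagree ((injOn_idxOf z).mono (coe_subset.2 (hD.trans hWz)))
    ((injOn_idxOf t).mono (coe_subset.2 (hD.trans hWt)))
    (fun T hT => card_le_lcsLen hz ht ((hT.trans hD).trans hWz) ((hT.trans hD).trans hWt))
    fun E hE hztE => card_le_lcsLen hz hy ((hE.trans hD).trans hWz) ((hE.trans hD).trans hWy)
      fun a ha b hb h => hxyD b (hE hb) a (hE ha) ?_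
  -- `x` and `t` order the letters of their common sublist `w` alike.
  have hw : ∀ {c}, c ∈ E → c ∈ w := fun hc => mem_toFinset.1 (hD (hE hc))
  rw [hwx.idxOf_lt_idxOf_iff hx (hw hb) (hw ha), ← hwt.idxOf_lt_idxOf_iff ht (hw hb) (hw ha)]
  exact hztE a ha b hb h

end List

theorem SimpleGraph.CliqueFree.four_mul_card_edgeFinset_le {V : Type*} [Fintype V]
    {G : SimpleGraph V} [DecidableRel G.Adj] (hG : G.CliqueFree 3) :
    4 * #G.edgeFinset ≤ Fintype.card V ^ 2 := by
  have h : #G.edgeFinset ≤ _ := hG.card_edgeFinset_le (r := 2)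
  rw [Nat.choose_eq_zero_of_lt (Nat.mod_lt _ two_pos), add_zero, Nat.mul_one] at h
  have := Nat.div_mul_le_self (Fintype.card V ^ 2 - (Fintype.card V % 2) ^ 2) (2 * 2)
  omega

theorem sq_card_le_eight_mul_sum_card_filter {V : Type*} [Fintype V]
    (r : V → V → Prop) [DecidableRel r] (hr : (SimpleGraph.fromRel r)ᶜ.CliqueFree 3)
    (hV : 4 ≤ Fintype.card V) :
    Fintype.card V ^ 2 ≤ 8 * ∑ a, #{b | r a b} := by
  classical
  set H := (SimpleGraph.fromRel r)ᶜ
  have hcover : ∀ a, Fintype.card V - 1 ≤ #{b | r a b} + #{b | r b a} + H.degree a := fun a =>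
    calc Fintype.card V - 1 = #(univ.erase a) := by rw [card_erase_of_mem (mem_univ a), card_univ]
    _ ≤ #(univ.filter (r a ·) ∪ univ.filter (r · a) ∪ H.neighborFinset a) :=
        card_le_card fun b hb => by
          simp only [mem_erase, mem_univ, and_true] at hb
          simp only [mem_union, mem_filter, mem_univ, true_and, SimpleGraph.mem_neighborFinset,
            H, SimpleGraph.compl_adj, SimpleGraph.fromRel_adj]
          tauto
    _ ≤ _ := (card_union_le _ _).trans (Nat.add_le_add_right (card_union_le _ _) _)
  have hswap : ∑ a, #{b | r b a} = ∑ a, #{b | r a b} := by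
    simp only [card_filter]
    exact sum_comm
  have hsum := sum_le_sum fun a (_ : a ∈ univ) => hcover a
  rw [sum_add_distrib, sum_add_distrib, hswap, H.sum_degrees_eq_twice_card_edges, sum_const,
    card_univ, smul_eq_mul] at hsum
  have hH := hr.four_mul_card_edgeFinset_le
  have hV' : Fintype.card V - 1 + 1 = Fintype.card V := by omega
  nlinarith

theorem Finset.card_filter_nsmul_le_sum {ι M : Type*} [AddCommMonoid M] [PartialOrder M]
    [IsOrderedAddMonoid M] (s : Finset ι) {f : ι → M} (hf : ∀ i ∈ s, 0 ≤ f i) (c : M)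
    [DecidablePred (c ≤ f ·)] :
    #{i ∈ s | c ≤ f i} • c ≤ ∑ i ∈ s, f i :=
  (card_nsmul_le_sum _ _ _ fun _ hi => (mem_filter.1 hi).2).trans
    (sum_le_sum_of_subset_of_nonneg (filter_subset _ _) fun i hi _ => hf i hi)

theorem le_or_le_or_le_of_le_mul_mul {d x y z : ℝ} (hd : 0 ≤ d) (hx : 0 ≤ x) (hy : 0 ≤ y)
    (hz : 0 ≤ z) (h : d ≤ x * y * z) :
    d ^ ((1 : ℝ) / 3) ≤ x ∨ d ^ ((1 : ℝ) / 3) ≤ y ∨ d ^ ((1 : ℝ) / 3) ≤ z := by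
  by_contra! hlt
  obtain ⟨hx', hy', hz'⟩ := hlt
  have hcube : (d ^ ((1 : ℝ) / 3)) ^ 3 = d := by
    rw [← Real.rpow_natCast, ← Real.rpow_mul hd]
    norm_num
  have := mul_lt_mul'' (mul_lt_mul'' hx' hy' hx hy) hz' (mul_nonneg hx hy) hz
  nlinarith

/-- **deterministic core of Lemma 11.** Let `Σ` be a finite alphabet and
`(π_1, σ_1), …, (π_m, σ_m)` be `m ≥ 4` pairs of permutations of `Σ`. If `d > 0` is a
real with `|lcs(π_i, σ_i)| ≥ d` for every `i`, then
`∑_{(i,j) ∈ [m]×[m]} |lcs(π_i, σ_j)| ≥ d^{1/3} · m² / 8`. -/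
theorem sum_lcs_pairs_ge {α : Type*} [Fintype α] [DecidableEq α]
    (m : ℕ) (hm : 4 ≤ m)
    (π σ : Fin m → List α)
    (hπnd : ∀ i, (π i).Nodup) (hπall : ∀ i, ∀ c : α, c ∈ π i)
    (hσnd : ∀ i, (σ i).Nodup) (hσall : ∀ i, ∀ c : α, c ∈ σ i)
    (d : ℝ) (hd : 0 < d)
    (hdiag : ∀ i : Fin m, d ≤ (lcsLen (π i) (σ i) : ℝ)) :
    d ^ ((1 : ℝ) / 3) * (m : ℝ) ^ 2 / 8 ≤
      ∑ i : Fin m, ∑ j : Fin m, (lcsLen (π i) (σ j) : ℝ) := by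
  set q := d ^ ((1 : ℝ) / 3)
  have htriple : ∀ i j k, q ≤ lcsLen (π i) (σ j) ∨ q ≤ lcsLen (π k) (σ j) ∨
      q ≤ lcsLen (π k) (σ i) := fun i j k =>
    le_or_le_or_le_of_le_mul_mul hd.le (Nat.cast_nonneg _) (Nat.cast_nonneg _) (Nat.cast_nonneg _)
      ((hdiag i).trans (mod_cast List.lcsLen_le_lcsLen_mul_lcsLen_mul_lcsLen (hπnd i) (hσnd j)
        (hπnd k) (hσnd i) (fun c _ => hσall j c) (fun c _ => hπall k c)))
  have hfree : (SimpleGraph.fromRel fun i j => q ≤ lcsLen (π i) (σ j))ᶜ.CliqueFree 3 := by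
    intro s hs
    obtain ⟨a, b, c, hab, hac, hbc, -⟩ := SimpleGraph.is3Clique_iff.1 hs
    simp only [SimpleGraph.compl_adj, SimpleGraph.fromRel_adj] at hab hac hbc
    rcases htriple a b c with h | h | h <;> tauto
  have hcount : (m : ℝ) ^ 2 ≤ 8 * ∑ i, (#{j | q ≤ lcsLen (π i) (σ j)} : ℝ) := by
    exact_mod_cast Fintype.card_fin m ▸ sq_card_le_eight_mul_sum_card_filter _ hfree (by simpa)
  have hq : 0 ≤ q := Real.rpow_nonneg hd.le _
  calc q * m ^ 2 / 8 ≤ ∑ i, #{j | q ≤ lcsLen (π i) (σ j)} • q := by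
        simp only [nsmul_eq_mul, ← sum_mul]
        nlinarith
    _ ≤ ∑ i, ∑ j, (lcsLen (π i) (σ j) : ℝ) :=
        sum_le_sum fun i _ => univ.card_filter_nsmul_le_sum (fun j _ => Nat.cast_nonneg _) q
end
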